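/- Let Ψ : [1,∞) → ℝ₊ be non-decreasing. If x ∈ [0,1) is irrational and |x − p/q| < 1/(q²·3Ψ(q)) for infinitely many pairs (p,q) ∈ ℤ × ℕ, then a_{n+1}(x) > Ψ(qₙ(x)) for infinitely many n, and hence aₙ(x)·a_{n+1}(x) > Ψ(qₙ(x)) for infinitely many n. -/

import Mathlib

/-!
Once `3Ψ(q) > 2`, Legendre's theorem makes every approximation `|x - p/q| < 1/(3q²Ψ(q))` a
convergent `p/q = pₙ/qₙ` with `qₙ ≤ q < qₙ₊₁`. The error formula
`x qₙ - pₙ = (-1)ⁿ / (qₙ₊₁ + qₙ Tⁿ⁺¹x)`, with `T` the Gauss map, gives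
`|x - pₙ/qₙ| > 1/((aₙ₊₁ + 2) qₙ²)`, hence `3Ψ(qₙ) ≤ 3Ψ(q) < aₙ₊₁ + 2 ≤ 3aₙ₊₁`. Large `q` force
large `n`, and if `Ψ` never exceeds `2/3` every `n` works because `aₙ₊₁ ≥ 1`.
-/

open Set MeasureTheory Filter

/-- The Gauss map `T(x) = 1/x - ⌊1/x⌋` (with `T 0 = 0`). -/
noncomputable def gaussMap (x : ℝ) : ℝ := Int.fract x⁻¹

/-- The `n`-th partial quotient `aₙ(x)` (indexed from `n = 1`). -/
noncomputable def cfA (x : ℝ) (n : ℕ) : ℕ := ⌊(gaussMap^[n - 1] x)⁻¹⌋₊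

/-- Numerators `pₙ` of the convergents of `[b 1, b 2, ...]`:
`p₀ = 0`, `p₁ = 1` (since `p₋₁ = 1`), `p_{n+2} = b (n+2) p_{n+1} + pₙ`. -/
def cfP (b : ℕ → ℕ) : ℕ → ℕ
  | 0 => 0
  | 1 => 1
  | n + 2 => b (n + 2) * cfP b (n + 1) + cfP b n

/-- Denominators (continuants) `qₙ` of the convergents of `[b 1, b 2, ...]`:
`q₀ = 1`, `q₁ = b 1`, `q_{n+2} = b (n+2) q_{n+1} + qₙ`. -/
def cfQ (b : ℕ → ℕ) : ℕ → ℕ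
  | 0 => 1
  | 1 => b 1
  | n + 2 => b (n + 2) * cfQ b (n + 1) + cfQ b n

/-- The cylinder `Iₙ(b 1, ..., b n)` of order `n`. -/
noncomputable def cfCyl (b : ℕ → ℕ) (n : ℕ) : Set ℝ :=
  {x ∈ Set.Ico (0 : ℝ) 1 | ∀ i, 1 ≤ i → i ≤ n → cfA x i = b i}

open Function

theorem irrational_gaussMap {y : ℝ} (h : Irrational y) : Irrational (gaussMap y) := by
  rw [gaussMap, ← Int.self_sub_floor]
  exact h.inv.sub_intCast _

theorem gaussMap_mem_Ioo_of_irrational {y : ℝ} (h : Irrational y) : gaussMap y ∈ Ioo 0 1 :=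
  ⟨(Int.fract_nonneg _).lt_of_ne' (irrational_gaussMap h).ne_zero, Int.fract_lt_one _⟩

theorem irrational_gaussMap_iterate {x : ℝ} (h : Irrational x) (n : ℕ) :
    Irrational (gaussMap^[n] x) :=
  Iterate.rec Irrational h (fun _ => irrational_gaussMap) n

theorem inv_eq_floor_add_gaussMap {y : ℝ} (hy : 0 ≤ y) : y⁻¹ = ⌊y⁻¹⌋₊ + gaussMap y := by
  rw [gaussMap, natCast_floor_eq_intCast_floor (inv_nonneg.2 hy), Int.floor_add_fract]

theorem gaussMap_iterate_mem_Ioo {x : ℝ} (hx : x ∈ Ioo 0 1) (hirr : Irrational x) :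
    ∀ n, gaussMap^[n] x ∈ Ioo 0 1
  | 0 => hx
  | n + 1 => by
    rw [iterate_succ_apply']
    exact gaussMap_mem_Ioo_of_irrational (irrational_gaussMap_iterate hirr n)

theorem inv_gaussMap_iterate_eq {x : ℝ} (hx : x ∈ Ioo 0 1) (hirr : Irrational x) (n : ℕ) :
    (gaussMap^[n] x)⁻¹ = cfA x (n + 1) + gaussMap^[n + 1] x := by
  rw [iterate_succ_apply', cfA, Nat.add_sub_cancel]
  exact inv_eq_floor_add_gaussMap (gaussMap_iterate_mem_Ioo hx hirr n).1.le

theorem one_le_cfA {x : ℝ} (hx : x ∈ Ioo 0 1) (hirr : Irrational x) (n : ℕ) :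
    1 ≤ cfA x (n + 1) := by
  have hy := gaussMap_iterate_mem_Ioo hx hirr n
  exact (Nat.one_le_floor_iff _).2 ((one_le_inv₀ hy.1).2 hy.2.le)

section Continuants

variable {b : ℕ → ℕ}

theorem cfP_add_two (b : ℕ → ℕ) (n : ℕ) : cfP b (n + 2) = b (n + 2) * cfP b (n + 1) + cfP b n :=
  rfl

theorem cfQ_add_two (b : ℕ → ℕ) (n : ℕ) : cfQ b (n + 2) = b (n + 2) * cfQ b (n + 1) + cfQ b n :=
  rfl

theorem cfP_succ_mul_cfQ_sub_cfP_mul_cfQ_succ (b : ℕ → ℕ) (n : ℕ) :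
    (cfP b (n + 1) * cfQ b n - cfP b n * cfQ b (n + 1) : ℤ) = (-1) ^ n := by
  induction n with
  | zero => simp [cfP, cfQ]
  | succ n ih =>
    push_cast [cfP_add_two, cfQ_add_two]
    linear_combination -ih

theorem one_le_cfQ (hb : ∀ n, 1 ≤ b (n + 1)) : ∀ n, 1 ≤ cfQ b n
  | 0 => le_rfl
  | 1 => hb 0
  | n + 2 => by
    rw [cfQ_add_two]
    nlinarith [hb (n + 1), one_le_cfQ hb (n + 1)]

theorem cfQ_le_cfQ_succ (hb : ∀ n, 1 ≤ b (n + 1)) : ∀ n, cfQ b n ≤ cfQ b (n + 1)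
  | 0 => hb 0
  | n + 1 => by
    rw [cfQ_add_two]
    nlinarith [hb (n + 1)]

theorem cfQ_mono (hb : ∀ n, 1 ≤ b (n + 1)) : Monotone (cfQ b) :=
  monotone_nat_of_le_succ (cfQ_le_cfQ_succ hb)

theorem cfQ_succ_le (hb : ∀ n, 1 ≤ b (n + 1)) : ∀ n, cfQ b (n + 1) ≤ (b (n + 1) + 1) * cfQ b n
  | 0 => by simp [cfQ]
  | n + 1 => by
    rw [cfQ_add_two, add_one_mul]
    exact Nat.add_le_add_left (cfQ_le_cfQ_succ hb n) _

theorem le_cfQ (hb : ∀ n, 1 ≤ b (n + 1)) : ∀ n, n ≤ cfQ b n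
  | 0 => Nat.zero_le _
  | 1 => hb 0
  | n + 2 => by
    rw [cfQ_add_two]
    nlinarith [hb (n + 1), le_cfQ hb (n + 1), one_le_cfQ hb n]

theorem exists_cfQ_le_lt (hb : ∀ n, 1 ≤ b (n + 1)) {q : ℕ} (hq : 1 ≤ q) :
    ∃ n, cfQ b n ≤ q ∧ q < cfQ b (n + 1) := by
  by_contra! h
  have hbounded : ∀ n, cfQ b n ≤ q := fun n => Nat.rec hq (fun n ih => h n ih) n
  have := (le_cfQ hb (q + 1)).trans (hbounded (q + 1))
  omega

end Continuants

theorem abs_le_abs_add_of_mul_nonneg {a b : ℝ} (h : 0 ≤ a * b) : |a| ≤ |a + b| := by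
  rw [(abs_add_eq_add_abs_iff a b).2 (by rcases mul_nonneg_iff.1 h with h | h <;> tauto)]
  exact le_add_of_nonneg_right (abs_nonneg b)

/-- Lagrange's best approximation argument: write `(p, q)` in the basis `(P₀, Q₀), (P₁, Q₁)`;
the two coordinates have opposite signs, so the two error terms add up with the same sign. -/
theorem abs_mul_sub_le_of_abs_det_eq_one {x : ℝ} {P₀ P₁ Q₀ Q₁ p q : ℤ}
    (hdet : |P₁ * Q₀ - P₀ * Q₁| = 1) (hsign : (x * Q₀ - P₀) * (x * Q₁ - P₁) ≤ 0)
    (hQ₀ : 0 < Q₀) (hq : 0 < q) (hqQ₁ : q < Q₁) (hpq : p * Q₀ ≠ P₀ * q) :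
    |x * Q₀ - P₀| ≤ |x * q - p| := by
  set ε := P₁ * Q₀ - P₀ * Q₁
  have hε2 : ε * ε = 1 := by rw [← abs_mul_abs_self, hdet, one_mul]
  set μ := ε * (P₁ * q - Q₁ * p)
  set ν := ε * (Q₀ * p - P₀ * q)
  have hp : μ * P₀ + ν * P₁ = p := by linear_combination p * hε2
  have hq' : μ * Q₀ + ν * Q₁ = q := by linear_combination q * hε2
  have hν : ν ≠ 0 :=
    mul_ne_zero (left_ne_zero_of_mul_eq_one hε2) (sub_ne_zero.2 (by rwa [mul_comm]))
  have hμν : μ * ν < 0 := by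
    rcases hν.lt_or_gt with hν | hν
    · have : 0 < μ * Q₀ := by nlinarith
      exact mul_neg_of_pos_of_neg (pos_of_mul_pos_left this hQ₀.le) hν
    · have : μ * Q₀ < 0 := by nlinarith
      exact mul_neg_of_neg_of_pos (neg_of_mul_neg_left this hQ₀.le) hν
  have hdecomp : x * q - p = μ * (x * Q₀ - P₀) + ν * (x * Q₁ - P₁) := by
    have hpR : (μ * P₀ + ν * P₁ : ℝ) = p := mod_cast hp
    have hqR : (μ * Q₀ + ν * Q₁ : ℝ) = q := mod_cast hq'
    linear_combination hpR - x * hqR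
  have hsame : 0 ≤ μ * (x * Q₀ - P₀) * (ν * (x * Q₁ - P₁)) := by
    have hμνR : (μ * ν : ℝ) < 0 := mod_cast hμν
    nlinarith
  have hμ : (1 : ℝ) ≤ |(μ : ℝ)| := mod_cast Int.one_le_abs (left_ne_zero_of_mul hμν.ne)
  calc |x * Q₀ - P₀| ≤ |(μ : ℝ)| * |x * Q₀ - P₀| := le_mul_of_one_le_left (abs_nonneg _) hμ
    _ = |μ * (x * Q₀ - P₀)| := (abs_mul _ _).symm
    _ ≤ |x * q - p| := hdecomp ▸ abs_le_abs_add_of_mul_nonneg hsame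

theorem exists_lt_snd_of_infinite {S : Set (ℤ × ℕ)} (hS : S.Infinite) {C : ℝ}
    (hC : ∀ pq ∈ S, |(pq.1 : ℝ)| ≤ C * pq.2) (B : ℕ) : ∃ pq ∈ S, B < pq.2 := by
  by_contra! hB
  refine hS (((finite_Icc (-⌈|C| * B⌉) ⌈|C| * B⌉).prod (finite_Iic B)).subset ?_)
  rintro ⟨p, q⟩ hpq
  have hqB : q ≤ B := hB _ hpq
  have hp : |(p : ℝ)| ≤ ⌈|C| * B⌉ := calc
    |(p : ℝ)| ≤ C * q := hC _ hpq
    _ ≤ |C| * B := mul_le_mul (le_abs_self C) (mod_cast hqB) q.cast_nonneg (abs_nonneg C)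
    _ ≤ ⌈|C| * B⌉ := Int.le_ceil _
  exact ⟨abs_le.1 (mod_cast hp), hqB⟩

theorem abs_le_mul_of_abs_sub_div_lt {x C : ℝ} {p : ℤ} {q : ℕ} (hq : 0 < q) (hx : |x| ≤ 1)
    (h : |x - p / q| < C) : |(p : ℝ)| ≤ (1 + C) * q := by
  have hqR : (0 : ℝ) < q := mod_cast hq
  calc |(p : ℝ)| = |(p : ℝ) / q| * q := by rw [abs_div, Nat.abs_cast, div_mul_cancel₀ _ hqR.ne']
    _ = |x - (x - p / q)| * q := by ring_nf
    _ ≤ (1 + C) * q := by gcongr; exact (abs_sub _ _).trans (add_le_add hx h.le)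

section Approximation

variable {x : ℝ}

theorem mul_cfQ_add_eq_cfP_add (hx : x ∈ Ioo 0 1) (hirr : Irrational x) (n : ℕ) :
    x * (cfQ (cfA x) (n + 1) + cfQ (cfA x) n * gaussMap^[n + 1] x)
      = cfP (cfA x) (n + 1) + cfP (cfA x) n * gaussMap^[n + 1] x := by
  induction n with
  | zero =>
    have h := inv_gaussMap_iterate_eq hx hirr 0
    rw [iterate_zero_apply] at h
    simp only [cfP, cfQ, zero_add, Nat.cast_one, Nat.cast_zero, one_mul, zero_mul, add_zero, ← h]
    exact mul_inv_cancel₀ hx.1.ne'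
  | succ n ih =>
    have ht : gaussMap^[n + 1] x * (cfA x (n + 2) + gaussMap^[n + 2] x) = 1 := by
      rw [← inv_gaussMap_iterate_eq hx hirr]
      exact mul_inv_cancel₀ (gaussMap_iterate_mem_Ioo hx hirr _).1.ne'
    push_cast [cfP_add_two, cfQ_add_two]
    linear_combination (cfA x (n + 2) + gaussMap^[n + 2] x) * ih
      - (x * cfQ (cfA x) n - cfP (cfA x) n) * ht

theorem cfQ_succ_add_cfQ_mul_gaussMap_pos (hx : x ∈ Ioo 0 1) (hirr : Irrational x) (n : ℕ) :
    0 < (cfQ (cfA x) (n + 1) : ℝ) + cfQ (cfA x) n * gaussMap^[n + 1] x := by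
  have hq : (1 : ℝ) ≤ cfQ (cfA x) (n + 1) := mod_cast one_le_cfQ (one_le_cfA hx hirr) _
  have ht := (gaussMap_iterate_mem_Ioo hx hirr (n + 1)).1
  positivity

theorem mul_cfQ_sub_cfP_eq (hx : x ∈ Ioo 0 1) (hirr : Irrational x) (n : ℕ) :
    x * cfQ (cfA x) n - cfP (cfA x) n
      = (-1) ^ n / (cfQ (cfA x) (n + 1) + cfQ (cfA x) n * gaussMap^[n + 1] x) := by
  rw [eq_div_iff (cfQ_succ_add_cfQ_mul_gaussMap_pos hx hirr n).ne']
  have hdet : (cfP (cfA x) (n + 1) * cfQ (cfA x) n - cfP (cfA x) n * cfQ (cfA x) (n + 1) : ℝ)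
      = (-1) ^ n := mod_cast cfP_succ_mul_cfQ_sub_cfP_mul_cfQ_succ (cfA x) n
  linear_combination (cfQ (cfA x) n : ℝ) * mul_cfQ_add_eq_cfP_add hx hirr n + hdet

theorem one_lt_abs_mul_cfQ_sub_cfP_mul (hx : x ∈ Ioo 0 1) (hirr : Irrational x) (n : ℕ) :
    1 < |x * cfQ (cfA x) n - cfP (cfA x) n| * (cfQ (cfA x) (n + 1) + cfQ (cfA x) n) := by
  have hD := cfQ_succ_add_cfQ_mul_gaussMap_pos hx hirr n
  have hq : (0 : ℝ) < cfQ (cfA x) n := mod_cast one_le_cfQ (one_le_cfA hx hirr) n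
  have ht := (gaussMap_iterate_mem_Ioo hx hirr (n + 1)).2
  rw [mul_cfQ_sub_cfP_eq hx hirr, abs_div, abs_pow, abs_neg, abs_one, one_pow, abs_of_pos hD,
    one_div_mul_eq_div, one_lt_div hD]
  nlinarith

theorem mul_cfQ_sub_cfP_mul_succ_neg (hx : x ∈ Ioo 0 1) (hirr : Irrational x) (n : ℕ) :
    (x * cfQ (cfA x) n - cfP (cfA x) n) * (x * cfQ (cfA x) (n + 1) - cfP (cfA x) (n + 1)) < 0 := by
  rw [mul_cfQ_sub_cfP_eq hx hirr, mul_cfQ_sub_cfP_eq hx hirr, div_mul_div_comm, ← pow_add,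
    Odd.neg_one_pow ⟨n, by ring⟩]
  exact div_neg_of_neg_of_pos neg_one_lt_zero
    (mul_pos (cfQ_succ_add_cfQ_mul_gaussMap_pos hx hirr n)
      (cfQ_succ_add_cfQ_mul_gaussMap_pos hx hirr (n + 1)))

theorem abs_mul_cfQ_sub_cfP_le (hx : x ∈ Ioo 0 1) (hirr : Irrational x) {n : ℕ} {p : ℤ} {q : ℕ}
    (hq : 0 < q) (hqn : q < cfQ (cfA x) (n + 1)) (hpq : p * cfQ (cfA x) n ≠ cfP (cfA x) n * q) :
    |x * cfQ (cfA x) n - cfP (cfA x) n| ≤ |x * q - p| := by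
  have hdet : |(cfP (cfA x) (n + 1) * cfQ (cfA x) n - cfP (cfA x) n * cfQ (cfA x) (n + 1) : ℤ)|
      = 1 := by
    rw [cfP_succ_mul_cfQ_sub_cfP_mul_cfQ_succ, abs_pow, abs_neg, abs_one, one_pow]
  have hsign := (mul_cfQ_sub_cfP_mul_succ_neg hx hirr n).le
  have hQ : (0 : ℤ) < cfQ (cfA x) n := mod_cast one_le_cfQ (one_le_cfA hx hirr) n
  simpa using abs_mul_sub_le_of_abs_det_eq_one hdet (by simpa using hsign) hQ (mod_cast hq)
    (mod_cast hqn) hpq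

/-- Legendre's theorem. -/
theorem exists_eq_convergent_of_abs_sub_lt (hx : x ∈ Ioo 0 1) (hirr : Irrational x) {p : ℤ}
    {q : ℕ} (hq : 0 < q) (h : |x - p / q| < 1 / (2 * q ^ 2)) :
    ∃ n, cfQ (cfA x) n ≤ q ∧ q < cfQ (cfA x) (n + 1) ∧ p * cfQ (cfA x) n = cfP (cfA x) n * q := by
  obtain ⟨n, hle, hlt⟩ := exists_cfQ_le_lt (one_le_cfA hx hirr) hq
  refine ⟨n, hle, hlt, ?_⟩
  by_contra hpq
  have hqR : (0 : ℝ) < q := mod_cast hq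
  have hleR : (cfQ (cfA x) n : ℝ) ≤ q := mod_cast hle
  have hbest := abs_mul_cfQ_sub_cfP_le hx hirr hq hlt hpq
  have habs : |x * q - p| = q * |x - p / q| := by
    rw [← abs_of_pos hqR, ← abs_mul, abs_of_pos hqR]
    congr 1
    field_simp
  have hone : (1 : ℝ) ≤ |(p : ℝ) * cfQ (cfA x) n - cfP (cfA x) n * q| := by
    exact_mod_cast Int.one_le_abs (sub_ne_zero.2 hpq)
  have hsmall : 2 * q ^ 2 * |x - p / q| < 1 := by
    rwa [lt_div_iff₀ (by positivity), mul_comm] at h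
  have := calc (1 : ℝ)
      ≤ |(p : ℝ) * cfQ (cfA x) n - cfP (cfA x) n * q| := hone
    _ = |q * (x * cfQ (cfA x) n - cfP (cfA x) n) - cfQ (cfA x) n * (x * q - p)| := by
      congr 1; ring
    _ ≤ q * |x * cfQ (cfA x) n - cfP (cfA x) n| + cfQ (cfA x) n * |x * q - p| := by
      refine (abs_sub _ _).trans ?_
      rw [abs_mul, abs_mul, Nat.abs_cast, Nat.abs_cast]
    _ ≤ q * |x * q - p| + q * |x * q - p| := by gcongr
    _ = 2 * q ^ 2 * |x - p / q| := by rw [habs]; ring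
  linarith

theorem lt_cfA_add_two_of_abs_sub_lt (hx : x ∈ Ioo 0 1) (hirr : Irrational x) {n : ℕ} {p : ℤ}
    {q : ℕ} {c : ℝ} (hqn : cfQ (cfA x) n ≤ q) (hpq : p * cfQ (cfA x) n = cfP (cfA x) n * q)
    (h : |x - p / q| < 1 / (q ^ 2 * c)) : c < cfA x (n + 1) + 2 := by
  by_contra! hc
  have hQ : (0 : ℝ) < cfQ (cfA x) n := mod_cast one_le_cfQ (one_le_cfA hx hirr) n
  have hQq : (cfQ (cfA x) n : ℝ) ≤ q := mod_cast hqn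
  have hc0 : 0 < c := lt_of_lt_of_le (by positivity) hc
  have hconv : (p : ℝ) / q = cfP (cfA x) n / cfQ (cfA x) n :=
    (div_eq_div_iff (hQ.trans_le hQq).ne' hQ.ne').2 (mod_cast hpq)
  have hqsucc : (cfQ (cfA x) (n + 1) : ℝ) ≤ (cfA x (n + 1) + 1) * cfQ (cfA x) n :=
    mod_cast cfQ_succ_le (one_le_cfA hx hirr) n
  set e := |x * cfQ (cfA x) n - cfP (cfA x) n|
  have hupper : e * q ^ 2 * c < cfQ (cfA x) n := by
    rwa [hconv, sub_div' hQ.ne', abs_div, Nat.abs_cast,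
      div_lt_div_iff₀ hQ (mul_pos (pow_pos (hQ.trans_le hQq) 2) hc0), one_mul, ← mul_assoc] at h
  have hlower : 1 < e * (c * cfQ (cfA x) n) := calc
    1 < e * (cfQ (cfA x) (n + 1) + cfQ (cfA x) n) := one_lt_abs_mul_cfQ_sub_cfP_mul hx hirr n
    _ ≤ e * (c * cfQ (cfA x) n) := by gcongr; nlinarith
  nlinarith

theorem exists_lt_cfQ_succ_and_lt_cfA {Ψ : ℝ → ℝ} (hmono : ∀ s t : ℝ, 1 ≤ s → s ≤ t → Ψ s ≤ Ψ t)
    (hx : x ∈ Ioo 0 1) (hirr : Irrational x) {p : ℤ} {q : ℕ} (hq : 0 < q) (hΨq : 2 < 3 * Ψ q)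
    (h : |x - p / q| < 1 / (q ^ 2 * (3 * Ψ q))) :
    ∃ n, q < cfQ (cfA x) (n + 1) ∧ Ψ (cfQ (cfA x) n) < cfA x (n + 1) := by
  have hqR : (0 : ℝ) < q := mod_cast hq
  have hLegendre : |x - p / q| < 1 / (2 * q ^ 2) :=
    h.trans_le (one_div_le_one_div_of_le (by positivity) (by nlinarith))
  obtain ⟨n, hle, hlt, hpq⟩ := exists_eq_convergent_of_abs_sub_lt hx hirr hq hLegendre
  have ha : (1 : ℝ) ≤ cfA x (n + 1) := mod_cast one_le_cfA hx hirr n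
  have hΨ : Ψ (cfQ (cfA x) n) ≤ Ψ q :=
    hmono _ _ (mod_cast one_le_cfQ (one_le_cfA hx hirr) n) (mod_cast hle)
  have := lt_cfA_add_two_of_abs_sub_lt hx hirr hle hpq h
  exact ⟨n, hlt, by linarith⟩

end Approximation

theorem exists_gt_and_psi_cfQ_lt_cfA {Ψ : ℝ → ℝ} (hpos : ∀ t, 1 ≤ t → 0 < Ψ t)
    (hmono : ∀ s t : ℝ, 1 ≤ s → s ≤ t → Ψ s ≤ Ψ t) {x : ℝ} (hx : x ∈ Ioo 0 1)
    (hirr : Irrational x)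
    (h : {pq : ℤ × ℕ | 0 < pq.2 ∧
      |x - (pq.1 : ℝ) / pq.2| < 1 / ((pq.2 : ℝ) ^ 2 * (3 * Ψ pq.2))}.Infinite) (m : ℕ) :
    ∃ n, m < n ∧ Ψ (cfQ (cfA x) n) < cfA x (n + 1) := by
  have ha := one_le_cfA hx hirr
  by_cases hsmall : ∀ t, 1 ≤ t → Ψ t ≤ 2 / 3
  · refine ⟨m + 1, m.lt_succ_self, (hsmall _ ?_).trans_lt ?_⟩
    · exact mod_cast one_le_cfQ ha _
    · have : (1 : ℝ) ≤ cfA x (m + 2) := mod_cast ha (m + 1)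
      linarith
  push Not at hsmall
  obtain ⟨t, ht1, ht⟩ := hsmall
  have hbound : ∀ pq ∈ {pq : ℤ × ℕ | 0 < pq.2 ∧
      |x - (pq.1 : ℝ) / pq.2| < 1 / ((pq.2 : ℝ) ^ 2 * (3 * Ψ pq.2))},
      |(pq.1 : ℝ)| ≤ (1 + 1 / (3 * Ψ 1)) * pq.2 := by
    rintro ⟨p, q⟩ ⟨hq, happ⟩
    dsimp only at hq happ ⊢
    have hq1 : (1 : ℝ) ≤ q := mod_cast hq
    have hΨ1 := hpos 1 le_rfl
    have hΨq := hmono 1 q le_rfl hq1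
    refine abs_le_mul_of_abs_sub_div_lt hq (by rw [abs_of_pos hx.1]; exact hx.2.le)
      (happ.trans_le (one_div_le_one_div_of_le (by positivity) ?_))
    exact (by linarith : 3 * Ψ 1 ≤ 3 * Ψ q).trans (le_mul_of_one_le_left (by linarith)
      (one_le_pow₀ hq1))
  obtain ⟨⟨p, q⟩, ⟨hq, happ⟩, hqB⟩ :=
    exists_lt_snd_of_infinite h hbound (max (cfQ (cfA x) (m + 1)) ⌈t⌉₊)
  have htq : t ≤ q := (Nat.le_ceil t).trans (mod_cast (le_max_right _ _).trans hqB.le)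
  obtain ⟨n, hqn, hΨ⟩ := exists_lt_cfQ_succ_and_lt_cfA hmono hx hirr hq
    (by linarith [hmono t q ht1 htq]) happ
  exact ⟨n, Nat.succ_lt_succ_iff.1 ((cfQ_mono ha).reflect_lt
    ((le_max_left _ _).trans_lt (hqB.trans hqn))), hΨ⟩

theorem K_three_Psi_subset_G (Ψ : ℝ → ℝ) (hpos : ∀ t, 1 ≤ t → 0 < Ψ t)
    (hmono : ∀ s t : ℝ, 1 ≤ s → s ≤ t → Ψ s ≤ Ψ t)
    (x : ℝ) (hx : x ∈ Set.Ico (0 : ℝ) 1) (hirr : Irrational x)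
    (h : {pq : ℤ × ℕ | 0 < pq.2 ∧
      |x - (pq.1 : ℝ) / pq.2| < 1 / ((pq.2 : ℝ) ^ 2 * (3 * Ψ pq.2))}.Infinite) :
    {n : ℕ | 1 ≤ n ∧ Ψ ((cfQ (cfA x) n : ℝ)) < (cfA x (n + 1) : ℝ)}.Infinite ∧
    {n : ℕ | 1 ≤ n ∧
      Ψ ((cfQ (cfA x) n : ℝ)) < (cfA x n : ℝ) * (cfA x (n + 1) : ℝ)}.Infinite := by
  have hx' : x ∈ Ioo 0 1 := ⟨hx.1.lt_of_ne' hirr.ne_zero, hx.2⟩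
  have hG : {n : ℕ | 1 ≤ n ∧ Ψ ((cfQ (cfA x) n : ℝ)) < (cfA x (n + 1) : ℝ)}.Infinite :=
    infinite_of_forall_exists_gt fun m => by
      obtain ⟨n, hmn, hn⟩ := exists_gt_and_psi_cfQ_lt_cfA hpos hmono hx' hirr h m
      exact ⟨n, ⟨by omega, hn⟩, hmn⟩
  refine ⟨hG, hG.mono ?_⟩
  rintro n ⟨hn, hlt⟩
  obtain ⟨k, rfl⟩ := Nat.exists_eq_add_of_le' hn
  have ha : (1 : ℝ) ≤ cfA x (k + 1) := mod_cast one_le_cfA hx' hirr k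
  exact ⟨hn, hlt.trans_le (le_mul_of_one_le_left (by positivity) ha)⟩
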